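/- With the lifting setup below, the Eisenbud operators commute up to homotopy: for all j, k with 1 ≤ j, k ≤ c, there exist R-linear maps λ_n : C_n → C_{n−3} such that t_{j,n−2}∘t_{k,n} − t_{k,n−2}∘t_{j,n} = d_{n−3}∘λ_n + λ_{n−1}∘d_n for all n. -/

import Mathlib

/-!
Since `f` is regular on `Q` and `Hom_Q(C̃_a, C̃_b)` is free, `f` is regular on every such
`Hom`, so the Koszul complex of `f` is exact there in degree one: `∑ fᵢ • φᵢ = 0` forces
each `φᵢ` into `(f) • Hom`. Applied to `∑ₗ fₗ • (d̃ t̃ₗ - t̃ₗ d̃) = d̃³ - d̃³ = 0`, this writes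
`d̃ t̃ₖ - t̃ₖ d̃ = ∑ₘ fₘ • σₘ`. Then `∑ₘ fₘ • (t̃ₘ t̃ₖ - t̃ₖ t̃ₘ - σₘ d̃ - d̃ σₘ) = 0` as well, so
its `j`-th component dies modulo `f`, and `λ = σⱼ ⊗ R` is the required homotopy.
-/

open TensorProduct

abbrev Rquot (Q : Type) [CommRing Q] {c : ℕ} (f : Fin c → Q) : Type :=
  Q ⧸ Ideal.span (Set.range f)

open RingTheory.Sequence

section Koszul

variable {R M : Type*} [CommRing R] [AddCommGroup M] [Module R M]

theorem Submodule.mem_ideal_span_range_smul_top_iff {ι : Type*} [Fintype ι] (f : ι → R)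
    (x : M) :
    x ∈ Ideal.span (Set.range f) • (⊤ : Submodule R M) ↔ ∃ w : ι → M, ∑ i, f i • w i = x := by
  constructor
  · intro hx
    refine Submodule.smul_induction_on hx (fun r hr m _ => ?_) ?_
    · obtain ⟨a, rfl⟩ := (Submodule.mem_span_range_iff_exists_fun R).mp hr
      exact ⟨fun i => a i • m, by simp only [Finset.sum_smul, smul_eq_mul, mul_comm, mul_smul]⟩
    · rintro _ _ ⟨w₁, rfl⟩ ⟨w₂, rfl⟩
      exact ⟨w₁ + w₂, by simp only [Pi.add_apply, smul_add, Finset.sum_add_distrib]⟩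
  · rintro ⟨w, rfl⟩
    exact Submodule.sum_mem _ fun i _ =>
      Submodule.smul_mem_smul (Ideal.subset_span ⟨i, rfl⟩) Submodule.mem_top

theorem Ideal.ofList_ofFn {c : ℕ} (f : Fin c → R) :
    Ideal.ofList (List.ofFn f) = Ideal.span (Set.range f) :=
  congrArg Ideal.span (Set.ext fun _ => List.mem_ofFn)

theorem mem_ideal_span_range_smul_top_of_sum_smul_eq_zero {c : ℕ} {f : Fin c → R}
    (hf : IsWeaklyRegular M (List.ofFn f)) {v : Fin c → M} (hv : ∑ i, f i • v i = 0)
    (j : Fin c) : v j ∈ Ideal.span (Set.range f) • (⊤ : Submodule R M) := by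
  induction c with
  | zero => exact j.elim0
  | succ c ih =>
    set g : Fin c → R := fun i => f i.castSucc with hg_def
    have hI : Ideal.span (Set.range g) ≤ Ideal.span (Set.range f) :=
      Ideal.span_mono (Set.range_comp_subset_range _ _)
    rw [List.ofFn_succ', List.concat_eq_append, isWeaklyRegular_append_iff,
      isWeaklyRegular_singleton_iff, Ideal.ofList_ofFn, ← hg_def] at hf
    obtain ⟨hg, hr⟩ := hf
    rw [Fin.sum_univ_castSucc] at hv
    have hlast : v (Fin.last c) ∈ Ideal.span (Set.range g) • (⊤ : Submodule R M) := by
      rw [← Submodule.Quotient.mk_eq_zero]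
      refine hr.right_eq_zero_of_smul ?_
      rw [← Submodule.Quotient.mk_smul, Submodule.Quotient.mk_eq_zero,
        eq_neg_of_add_eq_zero_right hv]
      exact Submodule.neg_mem _
        ((Submodule.mem_ideal_span_range_smul_top_iff g _).mpr ⟨_, rfl⟩)
    obtain ⟨w, hw⟩ := (Submodule.mem_ideal_span_range_smul_top_iff g _).mp hlast
    have hinit := ih hg (v := fun i => v i.castSucc + f (Fin.last c) • w i) (by
      rw [← hv, ← hw, Finset.smul_sum]
      simp only [smul_add, Finset.sum_add_distrib, smul_comm (f (Fin.last c))]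
      rfl)
    refine Fin.lastCases (Submodule.smul_mono_left hI hlast) (fun i => ?_) j
    have hrw : f (Fin.last c) • w i ∈ Ideal.span (Set.range f) • (⊤ : Submodule R M) :=
      Submodule.smul_mem_smul (Ideal.subset_span ⟨Fin.last c, rfl⟩) Submodule.mem_top
    simpa using Submodule.sub_mem _ (Submodule.smul_mono_left hI (hinit i)) hrw

theorem IsWeaklyRegular.of_flat (M : Type*) [AddCommGroup M] [Module R M] [Module.Flat R M]
    {rs : List R} (h : IsWeaklyRegular R rs) : IsWeaklyRegular M rs :=
  ((TensorProduct.rid R M).isWeaklyRegular_congr rs).mp h.isWeaklyRegular_lTensor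

end Koszul

section LinearMaps

variable {R M N P ι : Type*} [CommRing R] [AddCommGroup M] [AddCommGroup N] [AddCommGroup P]
  [Module R M] [Module R N] [Module R P] [Fintype ι] (a : ι → R)

theorem LinearMap.comp_sum_smul (g : N →ₗ[R] P) (φ : ι → M →ₗ[R] N) :
    g ∘ₗ ∑ i, a i • φ i = ∑ i, a i • (g ∘ₗ φ i) := by
  ext
  simp

theorem LinearMap.sum_smul_comp (φ : ι → N →ₗ[R] P) (g : M →ₗ[R] N) :
    (∑ i, a i • φ i) ∘ₗ g = ∑ i, a i • (φ i ∘ₗ g) := by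
  ext
  simp

theorem LinearMap.baseChange_eq_zero_of_mem_smul_top {I : Ideal R} {φ : M →ₗ[R] N}
    (h : φ ∈ I • (⊤ : Submodule R (M →ₗ[R] N))) :
    φ.baseChange (R ⧸ I) = 0 := by
  refine Submodule.smul_induction_on h (fun r hr ψ _ => ?_) fun φ₁ φ₂ h₁ h₂ => ?_
  · rw [LinearMap.baseChange_smul, ← algebraMap_smul (R ⧸ I),
      Ideal.Quotient.algebraMap_eq, Ideal.Quotient.eq_zero_iff_mem.mpr hr, zero_smul]
  · rw [LinearMap.baseChange_add, h₁, h₂, add_zero]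

end LinearMaps

section EisenbudOperators

variable {Q : Type} [CommRing Q] {c : ℕ} {f : Fin c → Q} {Ct : ℤ → Type}
  [∀ n, AddCommGroup (Ct n)] [∀ n, Module Q (Ct n)] {dt : ∀ n : ℤ, Ct (n + 1) →ₗ[Q] Ct n}
  {tt : Fin c → ∀ n : ℤ, Ct (n + 1 + 1) →ₗ[Q] Ct n}

theorem sum_smul_dt_comp_tt_sub_tt_comp_dt_eq_zero
    (hdd : ∀ n, dt n ∘ₗ dt (n + 1) = ∑ k, f k • tt k n) (n : ℤ) :
    ∑ l, f l • (dt n ∘ₗ tt l (n + 1) - tt l n ∘ₗ dt (n + 1 + 1)) = 0 := by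
  simp only [smul_sub, Finset.sum_sub_distrib]
  rw [← LinearMap.comp_sum_smul, ← LinearMap.sum_smul_comp, ← hdd, ← hdd, LinearMap.comp_assoc,
    sub_self]

theorem sum_smul_homotopy_defect_eq_zero
    (hdd : ∀ n, dt n ∘ₗ dt (n + 1) = ∑ k, f k • tt k n) {k : Fin c}
    {σ : ∀ n : ℤ, Fin c → (Ct (n + 1 + 1 + 1) →ₗ[Q] Ct n)}
    (hσ : ∀ n, dt n ∘ₗ tt k (n + 1) - tt k n ∘ₗ dt (n + 1 + 1) = ∑ m, f m • σ n m) (n : ℤ) :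
    ∑ m, f m • (tt m n ∘ₗ tt k (n + 1 + 1) - tt k n ∘ₗ tt m (n + 1 + 1)
      - σ n m ∘ₗ dt (n + 1 + 1 + 1) - dt n ∘ₗ σ (n + 1) m) = 0 := by
  simp only [smul_sub, Finset.sum_sub_distrib]
  rw [← LinearMap.sum_smul_comp, ← LinearMap.comp_sum_smul, ← LinearMap.sum_smul_comp,
    ← LinearMap.comp_sum_smul, ← hdd, ← hdd, ← hσ, ← hσ]
  simp only [LinearMap.comp_sub, LinearMap.sub_comp, LinearMap.comp_assoc]
  abel

end EisenbudOperators

/-- `t_j ∘ t_k` is homotopic to `t_k ∘ t_j`. -/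
theorem eisenbud_operators_commute_up_to_homotopy
    (Q : Type) [CommRing Q] (c : ℕ) (f : Fin c → Q)
    (hreg : RingTheory.Sequence.IsRegular Q (List.ofFn f))
    (Ct : ℤ → Type) [∀ n, AddCommGroup (Ct n)] [∀ n, Module Q (Ct n)]
    (hfree : ∀ n, Module.Free Q (Ct n)) (hfin : ∀ n, Module.Finite Q (Ct n))
    (dt : ∀ n : ℤ, Ct (n + 1) →ₗ[Q] Ct n)
    (tt : Fin c → ∀ n : ℤ, Ct (n + 1 + 1) →ₗ[Q] Ct n)
    (hdd : ∀ (n : ℤ) (x : Ct (n + 1 + 1)),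
      dt n (dt (n + 1) x) = ∑ k, f k • tt k n x) :
    ∀ j k : Fin c,
      ∃ lam : ∀ n : ℤ,
          (Rquot Q f ⊗[Q] Ct (n + 1 + 1 + 1)) →ₗ[Rquot Q f] (Rquot Q f ⊗[Q] Ct n),
        ∀ (n : ℤ) (x : Rquot Q f ⊗[Q] Ct (n + 1 + 1 + 1 + 1)),
          (tt j n).baseChange (Rquot Q f) ((tt k (n + 1 + 1)).baseChange (Rquot Q f) x) -
              (tt k n).baseChange (Rquot Q f)
                ((tt j (n + 1 + 1)).baseChange (Rquot Q f) x) =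
            (dt n).baseChange (Rquot Q f) (lam (n + 1) x) +
              lam n ((dt (n + 1 + 1 + 1)).baseChange (Rquot Q f) x) := by
  intro j k
  have hdd' : ∀ n, dt n ∘ₗ dt (n + 1) = ∑ k, f k • tt k n := fun n =>
    LinearMap.ext fun x => by simpa using hdd n x
  have hregHom : ∀ a b, IsWeaklyRegular (Ct a →ₗ[Q] Ct b) (List.ofFn f) := fun a b =>
    have := hfree a; have := hfin a; have := hfree b
    IsWeaklyRegular.of_flat _ hreg.toIsWeaklyRegular
  have hσ : ∀ n, ∃ σ : Fin c → (Ct (n + 1 + 1 + 1) →ₗ[Q] Ct n),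
      dt n ∘ₗ tt k (n + 1) - tt k n ∘ₗ dt (n + 1 + 1) = ∑ m, f m • σ m := fun n =>
    ((Submodule.mem_ideal_span_range_smul_top_iff f _).mp
      (mem_ideal_span_range_smul_top_of_sum_smul_eq_zero (hregHom _ _)
        (sum_smul_dt_comp_tt_sub_tt_comp_dt_eq_zero hdd' n) k)).imp fun _ => Eq.symm
  choose σ hσ using hσ
  refine ⟨fun n => (σ n j).baseChange (Rquot Q f), fun n x => ?_⟩
  have hdefect := LinearMap.congr_fun (LinearMap.baseChange_eq_zero_of_mem_smul_top
    (mem_ideal_span_range_smul_top_of_sum_smul_eq_zero (hregHom _ _)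
      (sum_smul_homotopy_defect_eq_zero hdd' hσ n) j)) x
  simp only [LinearMap.baseChange_sub, LinearMap.baseChange_comp, LinearMap.sub_apply,
    LinearMap.comp_apply, LinearMap.zero_apply] at hdefect
  rw [← sub_eq_zero, ← hdefect]
  abel
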